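/- Let $Q_1$ and $Q_2$ be probability measures on $\mathbb{R}^{d}$ and let $f:\mathbb{R}^{d}\to\mathbb{R}^{p}$ be a measurable feature map, square-integrable with respect to both $Q_1$ and $Q_2$, with means $\mu_c=\mu_f(Q_c)$ satisfying $\mu_1\neq\mu_2$. Consider the nearest-class-mean classifier $h(x)=\arg\min_{c\in\{1,2\}}\|f(x)-\mu_c\|$ (ties broken in favor of class 2) and the balanced mixture task $P$ which with probability $1/2$ draws $(x,c)$ with $x\sim Q_c$, for $c=1,2$. Then the zero-one risk of $h$ satisfies $L_P(h)\le 4\,V_f(Q_1,Q_2)$, where $V_f(Q_1,Q_2)=\frac{\mathrm{Var}_f(Q_1)+\mathrm{Var}_f(Q_2)}{2\|\mu_1-\mu_2\|^2}$ is the class-distance normalized variance. -/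

import Mathlib

open MeasureTheory

lemma markov_aux {α : Type*} [MeasurableSpace α] (Q : Measure α) [IsFiniteMeasure Q]
    (g : α → ℝ) (hg : Integrable g Q) (hpos : ∀ x, 0 ≤ g x) (ε : ℝ) (hε : 0 < ε)
    (S : Set α) (hS : S ⊆ {x | ε ≤ g x}) : (Q S).toReal ≤ (∫ x, g x ∂Q) / ε := by
  rw [le_div_iff₀ hε]
  calc (Q S).toReal * ε ≤ (Q {x | ε ≤ g x}).toReal * ε := by
        exact mul_le_mul_of_nonneg_right
          (ENNReal.toReal_mono (measure_ne_top Q _) (measure_mono hS)) hε.le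
    _ = ε * (Q {x | ε ≤ g x}).toReal := mul_comm _ _
    _ ≤ ∫ x, g x ∂Q := mul_meas_ge_le_integral_of_nonneg (ae_of_all _ hpos) hg ε

/-- For probability measures `Q₁, Q₂` on `ℝ^d` and a measurable feature map
`f : ℝ^d → ℝ^p`, square-integrable with respect to both, with distinct feature means
`μ_c = E_{x∼Q_c}[f(x)]`, the nearest-class-mean classifier `h` (classes encoded as
`0, 1 : Fin 2` for classes `1, 2`, with ties broken in favor of class `2`) on the balanced
mixture task `P` has zero-one risk
`L_P(h) = (Q₁(h ≠ class 1) + Q₂(h ≠ class 2)) / 2` at most `4 V_f(Q₁, Q₂)`, where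
`V_f(Q₁,Q₂) = (Var_f(Q₁) + Var_f(Q₂)) / (2‖μ₁ - μ₂‖²)` is the class-distance normalized
variance. -/
theorem nearest_class_mean_risk_le_CDNV
    {d p : ℕ}
    (Q1 Q2 : Measure (EuclideanSpace ℝ (Fin d)))
    [IsProbabilityMeasure Q1] [IsProbabilityMeasure Q2]
    (f : EuclideanSpace ℝ (Fin d) → EuclideanSpace ℝ (Fin p))
    (hf : Measurable f) (hL2_1 : MemLp f 2 Q1) (hL2_2 : MemLp f 2 Q2)
    (μ1 μ2 : EuclideanSpace ℝ (Fin p))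
    (hμ1 : μ1 = ∫ x, f x ∂Q1) (hμ2 : μ2 = ∫ x, f x ∂Q2)
    (hne : μ1 ≠ μ2)
    (h : EuclideanSpace ℝ (Fin d) → Fin 2)
    (hh : ∀ x, h x = if ‖f x - μ1‖ < ‖f x - μ2‖ then 0 else 1) :
    ((Q1 {x | h x ≠ 0}).toReal + (Q2 {x | h x ≠ 1}).toReal) / 2 ≤
      4 * (((∫ x, ‖f x - μ1‖ ^ 2 ∂Q1) + ∫ x, ‖f x - μ2‖ ^ 2 ∂Q2) /
        (2 * ‖μ1 - μ2‖ ^ 2)) := by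
  set δ := ‖μ1 - μ2‖ with hδ
  have hδpos : 0 < δ := norm_pos_iff.mpr (sub_ne_zero.mpr hne)
  set ε := (δ / 2) ^ 2 with hε
  have hεpos : 0 < ε := by positivity
  have hg1 : Integrable (fun x => ‖f x - μ1‖ ^ 2) Q1 :=
    (hL2_1.sub (memLp_const μ1)).norm.integrable_sq
  have hg2 : Integrable (fun x => ‖f x - μ2‖ ^ 2) Q2 :=
    (hL2_2.sub (memLp_const μ2)).norm.integrable_sq
  have key : ∀ (x : EuclideanSpace ℝ (Fin d)) (ν : EuclideanSpace ℝ (Fin p)),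
      ν = μ1 ∨ ν = μ2 → δ ≤ 2 * ‖f x - ν‖ → ε ≤ ‖f x - ν‖ ^ 2 := by
    intro x ν _ hle
    have h2 : δ / 2 ≤ ‖f x - ν‖ := by linarith
    calc ε = (δ/2)^2 := rfl
      _ ≤ ‖f x - ν‖ ^ 2 := by
          apply pow_le_pow_left₀ (by positivity) h2
  have htri : ∀ x, δ ≤ ‖f x - μ2‖ + ‖f x - μ1‖ := by
    intro x
    calc δ = ‖(f x - μ2) - (f x - μ1)‖ := by rw [hδ]; congr 1; abel
      _ ≤ ‖f x - μ2‖ + ‖f x - μ1‖ := norm_sub_le _ _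
  have hS1 : {x | h x ≠ 0} ⊆ {x | ε ≤ ‖f x - μ1‖ ^ 2} := by
    intro x hx
    simp only [Set.mem_setOf_eq, hh x] at hx ⊢
    have hcond : ¬ (‖f x - μ1‖ < ‖f x - μ2‖) := by
      intro hc; exact hx (by simp [hc])
    push_neg at hcond
    exact key x μ1 (Or.inl rfl) (by have := htri x; linarith)
  have hS2 : {x | h x ≠ 1} ⊆ {x | ε ≤ ‖f x - μ2‖ ^ 2} := by
    intro x hx
    simp only [Set.mem_setOf_eq, hh x] at hx ⊢
    have hcond : ‖f x - μ1‖ < ‖f x - μ2‖ := by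
      by_contra hc; exact hx (by simp [hc])
    exact key x μ2 (Or.inr rfl) (by have := htri x; linarith)
  have hb1 := markov_aux Q1 _ hg1 (fun x => by positivity) ε hεpos _ hS1
  have hb2 := markov_aux Q2 _ hg2 (fun x => by positivity) ε hεpos _ hS2
  have heq : 4 * (((∫ x, ‖f x - μ1‖ ^ 2 ∂Q1) + ∫ x, ‖f x - μ2‖ ^ 2 ∂Q2) /
        (2 * δ ^ 2)) =
      ((∫ x, ‖f x - μ1‖ ^ 2 ∂Q1) / ε + (∫ x, ‖f x - μ2‖ ^ 2 ∂Q2) / ε) / 2 := by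
    rw [hε]
    field_simp
    ring
  rw [heq]
  gcongr
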